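/- If x ∈ GL₆(𝕂) has rank matrix R(x) = [[2,2],[2,2]] (i.e., the lower right 4×4, 4×2, 2×4 and 2×2 corner blocks of x all have rank 2), then x·x_left does not belong to Lie(P)·x + x·Lie(P)^τ. -/

import Mathlib

/-!
Cut `x` into 2 × 2 blocks `xᵢⱼ`, `i, j ∈ {0, 1, 2}`. Since the lower right 4 × 4 and 2 × 4
corners both have rank 2, the rows of the lower right 2 × 4 corner span those of the 4 × 4 one:
`x₁ⱼ = M x₂ⱼ` for `j = 1, 2` and some `M`; and `x₂₂` is invertible. If `x·x_left = p·x + x·q`,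
the blocks `(1, 2)` and `(2, 2)` of this equation give `(p₁₁ M + p₁₂ - M p₂₂) x₂₂ = 0`, hence
`p₁₂ = M p₂₂ - p₁₁ M`; with this, the block `(1, 1)` equation is `M` times the block `(2, 1)` one,
so `x₁₀ = M x₂₀` as well. Then the middle block row of `x` is `M` times the bottom one,
contradicting invertibility.
-/

open Matrix

/-- The Lie algebra of the parabolic `P ⊆ GL₆(𝕂)`: block upper triangular `6 × 6`
matrices with respect to the partition `(2,2,2)` of `6`. -/
def LieP (𝕂 : Type*) [RCLike 𝕂] : Set (Matrix (Fin 6) (Fin 6) 𝕂) :=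
  {p | ∀ i j : Fin 6, (j : ℕ) / 2 < (i : ℕ) / 2 → p i j = 0}

/-- `Lie(P)^τ`, the image of `Lie(P)` under matrix transpose. -/
def LiePtau (𝕂 : Type*) [RCLike 𝕂] : Set (Matrix (Fin 6) (Fin 6) 𝕂) :=
  {q | qᵀ ∈ LieP 𝕂}

/-- The block matrix `x_left = [[0,I₂,0],[0,0,I₂],[0,0,0]]` (2×2 blocks). -/
def xLeft (𝕂 : Type*) [RCLike 𝕂] : Matrix (Fin 6) (Fin 6) 𝕂 :=
  Matrix.of fun i j => if (j : ℕ) = (i : ℕ) + 2 then 1 else 0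

/-- `x_right = x_left^τ`. -/
def xRight (𝕂 : Type*) [RCLike 𝕂] : Matrix (Fin 6) (Fin 6) 𝕂 := (xLeft 𝕂)ᵀ

/-- The set `Lie(P)·x + x·Lie(P)^τ = {p·x + x·q : p ∈ Lie(P), q ∈ Lie(P)^τ}`. -/
def tanSet {𝕂 : Type*} [RCLike 𝕂] (x : Matrix (Fin 6) (Fin 6) 𝕂) :
    Set (Matrix (Fin 6) (Fin 6) 𝕂) :=
  {m | ∃ p ∈ LieP 𝕂, ∃ q ∈ LiePtau 𝕂, m = p * x + x * q}

/-- The lower right `i × j` corner block of a `6 × 6` matrix. -/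
def corner {𝕂 : Type*} [RCLike 𝕂] (i j : ℕ) (hi : i ≤ 6) (hj : j ≤ 6)
    (x : Matrix (Fin 6) (Fin 6) 𝕂) : Matrix (Fin i) (Fin j) 𝕂 :=
  Matrix.of fun a b =>
    x ⟨6 - i + a.1, by have := a.2; omega⟩ ⟨6 - j + b.1, by have := b.2; omega⟩

/-- The rank matrix `R(x) = [[r₄ₓ₄(x), r₄ₓ₂(x)], [r₂ₓ₄(x), r₂ₓ₂(x)]]`, where
`r_{i×j}(x)` is the rank of the lower right `i × j` corner block of `x`. -/
noncomputable def rankMatrix {𝕂 : Type*} [RCLike 𝕂] (x : Matrix (Fin 6) (Fin 6) 𝕂) :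
    Matrix (Fin 2) (Fin 2) ℕ :=
  !![(corner 4 4 (by norm_num) (by norm_num) x).rank,
     (corner 4 2 (by norm_num) (by norm_num) x).rank;
     (corner 2 4 (by norm_num) (by norm_num) x).rank,
     (corner 2 2 (by norm_num) (by norm_num) x).rank]

def blockIndex (i : Fin 3) (a : Fin 2) : Fin 6 := ⟨2 * i + a, by omega⟩

def block {α : Type*} (i j : Fin 3) (x : Matrix (Fin 6) (Fin 6) α) : Matrix (Fin 2) (Fin 2) α :=
  x.submatrix (blockIndex i) (blockIndex j)

section Blocks

variable {α : Type*}

theorem sum_fin_six_eq_sum_blocks [AddCommMonoid α] (f : Fin 6 → α) :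
    ∑ k, f k = ∑ i : Fin 3, ∑ a : Fin 2, f (blockIndex i a) := by
  simp [Fin.sum_univ_succ, blockIndex, add_assoc]

theorem block_add [Add α] (i j : Fin 3) (m n : Matrix (Fin 6) (Fin 6) α) :
    block i j (m + n) = block i j m + block i j n := rfl

theorem block_mul [NonUnitalNonAssocSemiring α] (i j : Fin 3) (m n : Matrix (Fin 6) (Fin 6) α) :
    block i j (m * n) = block i 0 m * block 0 j n + block i 1 m * block 1 j n +
      block i 2 m * block 2 j n := by
  ext a b
  simp only [block, Matrix.add_apply, submatrix_apply, mul_apply]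
  rw [sum_fin_six_eq_sum_blocks, Fin.sum_univ_three]

end Blocks

section LinearAlgebra

variable {K : Type*} [Field K] {l m n : Type*} [Fintype l] [Fintype m] [Fintype n]

theorem Matrix.isUnit_det_of_rank_eq_card [DecidableEq n] {A : Matrix n n K}
    (h : A.rank = Fintype.card n) : IsUnit A.det := by
  rw [← isUnit_iff_isUnit_det, ← linearIndependent_rows_iff_isUnit,
    linearIndependent_iff_card_eq_finrank_span, Set.finrank, ← rank_eq_finrank_span_row, h]

theorem Matrix.exists_eq_mul_of_rank_fromRows_le {A : Matrix l n K} {B : Matrix m n K}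
    (h : (fromRows A B).rank ≤ B.rank) : ∃ M : Matrix l m K, A = M * B := by
  have hle : Submodule.span K (Set.range B.row) ≤
      Submodule.span K (Set.range (fromRows A B).row) :=
    Submodule.span_mono (by rintro _ ⟨i, rfl⟩; exact ⟨Sum.inr i, rfl⟩)
  have hspan := Submodule.eq_of_le_of_finrank_le hle (by
    rwa [← rank_eq_finrank_span_row, ← rank_eq_finrank_span_row])
  have hA (i : l) : A i ∈ Submodule.span K (Set.range B.row) :=
    hspan ▸ Submodule.subset_span ⟨Sum.inl i, rfl⟩
  choose c hc using fun i => (Submodule.mem_span_range_iff_exists_fun K).mp (hA i)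
  refine ⟨of c, ?_⟩
  ext i j
  rw [← hc i]
  simp [mul_apply, Finset.sum_apply]

theorem not_isUnit_det_of_block_row_eq_mul (x : Matrix (Fin 6) (Fin 6) K)
    (M : Matrix (Fin 2) (Fin 2) K) (h : ∀ j, block 1 j x = M * block 2 j x) :
    ¬IsUnit x.det := by
  rw [isUnit_iff_ne_zero, not_not, ← exists_vecMul_eq_zero_iff]
  refine ⟨Pi.single (blockIndex 1 0) 1 - ∑ k, Pi.single (blockIndex 2 k) (M 0 k), ?_, ?_⟩
  · intro h0
    have := congrFun h0 (blockIndex 1 0)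
    simp [Fin.sum_univ_two, blockIndex] at this
  · have hsurj : ∀ c : Fin 6, ∃ j b, blockIndex j b = c := by decide
    funext c
    obtain ⟨j, b, rfl⟩ := hsurj c
    have := congrFun₂ (h j) 0 b
    simp only [block, submatrix_apply, mul_apply, Fin.sum_univ_two] at this
    simp [sub_vecMul, add_vecMul, single_vecMul, Fin.sum_univ_two, this]

end LinearAlgebra

theorem eq_mul_of_block_equations {R : Type*} [CommRing R] {n : Type*} [Fintype n]
    [DecidableEq n] {M P₁₁ P₁₂ P₂₂ Q₁₁ Q₂₁ Q₂₂ X₁₀ X₁₁ X₁₂ X₂₀ X₂₁ X₂₂ : Matrix n n R}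
    (hX₂₂ : IsUnit X₂₂.det) (hX₁₁ : X₁₁ = M * X₂₁) (hX₁₂ : X₁₂ = M * X₂₂)
    (h₁₁ : X₁₀ = P₁₁ * X₁₁ + P₁₂ * X₂₁ + (X₁₁ * Q₁₁ + X₁₂ * Q₂₁))
    (h₁₂ : X₁₁ = P₁₁ * X₁₂ + P₁₂ * X₂₂ + X₁₂ * Q₂₂)
    (h₂₁ : X₂₀ = P₂₂ * X₂₁ + (X₂₁ * Q₁₁ + X₂₂ * Q₂₁))
    (h₂₂ : X₂₁ = P₂₂ * X₂₂ + X₂₂ * Q₂₂) : X₁₀ = M * X₂₀ := by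
  have hP : P₁₁ * M + P₁₂ - M * P₂₂ = 0 := by
    refine ((isUnit_iff_isUnit_det X₂₂).mpr hX₂₂).mul_left_eq_zero.mp ?_
    calc (P₁₁ * M + P₁₂ - M * P₂₂) * X₂₂ = X₁₁ - M * X₂₁ := by
          rw [h₁₂, h₂₂, hX₁₂]; noncomm_ring
      _ = 0 := by rw [hX₁₁, sub_self]
  calc X₁₀ = (P₁₁ * M + P₁₂ - M * P₂₂) * X₂₁ + M * X₂₀ := by
        rw [h₁₁, h₂₁, hX₁₁, hX₁₂]; noncomm_ring
    _ = M * X₂₀ := by rw [hP, zero_mul, zero_add]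

section RCLike

variable {𝕂 : Type*} [RCLike 𝕂]

theorem block_eq_zero_of_mem_LieP {p : Matrix (Fin 6) (Fin 6) 𝕂} (hp : p ∈ LieP 𝕂)
    {i j : Fin 3} (hij : j < i) : block i j p = 0 := by
  ext a b
  exact hp _ _ (by simp only [blockIndex]; omega)

theorem block_eq_zero_of_mem_LiePtau {q : Matrix (Fin 6) (Fin 6) 𝕂} (hq : q ∈ LiePtau 𝕂)
    {i j : Fin 3} (hij : i < j) : block i j q = 0 := by
  ext a b
  exact hq _ _ (by simp only [blockIndex]; omega)

theorem block_mul_xLeft_succ (x : Matrix (Fin 6) (Fin 6) 𝕂) (i : Fin 3) (j : Fin 2) :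
    block i j.succ (x * xLeft 𝕂) = block i j.castSucc x := by
  ext a b
  have hshift (k : Fin 6) :
      (blockIndex j.succ b : ℕ) = k + 2 ↔ blockIndex j.castSucc b = k := by
    simp only [blockIndex, Fin.ext_iff, Fin.val_succ, Fin.val_castSucc]
    omega
  simp only [block, submatrix_apply, mul_apply, xLeft, of_apply, mul_ite, mul_one, mul_zero,
    hshift, Finset.sum_ite_eq, Finset.mem_univ, if_true]

theorem exists_block_row_eq_mul_of_rank_corner_le (x : Matrix (Fin 6) (Fin 6) 𝕂)
    (h : (corner 4 4 (by norm_num) (by norm_num) x).rank ≤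
      (corner 2 4 (by norm_num) (by norm_num) x).rank) :
    ∃ M, ∀ j : Fin 2, block 1 j.succ x = M * block 2 j.succ x := by
  set W := corner 4 4 (by norm_num) (by norm_num) x
  set A := W.submatrix (Fin.castAdd 2) id
  have hW : W = (fromRows A (corner 2 4 (by norm_num) (by norm_num) x)).submatrix
      finSumFinEquiv.symm (Equiv.refl _) := by
    ext a b; fin_cases a <;> rfl
  rw [hW, rank_submatrix] at h
  obtain ⟨M, hM⟩ := exists_eq_mul_of_rank_fromRows_le h
  refine ⟨M, fun j => ?_⟩
  ext a b
  have := congrFun₂ hM a ⟨2 * j + b, by omega⟩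
  simp only [A, W, corner, block, submatrix_apply, mul_apply, of_apply, id] at this ⊢
  convert this using 4 <;> simp [blockIndex, Fin.ext_iff] <;> omega

end RCLike

theorem xLeft_transversal_of_rankMatrix_two {𝕂 : Type*} [RCLike 𝕂]
    (x : Matrix (Fin 6) (Fin 6) 𝕂) (hx : IsUnit x.det)
    (hR : rankMatrix x = !![2, 2; 2, 2]) :
    x * xLeft 𝕂 ∉ tanSet x := by
  rintro ⟨p, hp, q, hq, heq⟩
  have h44 : (corner 4 4 (by norm_num) (by norm_num) x).rank = 2 := congrFun₂ hR 0 0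
  have h24 : (corner 2 4 (by norm_num) (by norm_num) x).rank = 2 := congrFun₂ hR 1 0
  have h22 : (block 2 2 x).rank = 2 := congrFun₂ hR 1 1
  obtain ⟨M, hM⟩ := exists_block_row_eq_mul_of_rank_corner_le x (h44.trans h24.symm).le
  have hblock (i : Fin 3) (j : Fin 2) :
      block i j.castSucc x = block i j.succ (p * x + x * q) := by
    rw [← block_mul_xLeft_succ, heq]
  have h₁₁ := hblock 1 0
  have h₁₂ := hblock 1 1
  have h₂₁ := hblock 2 0
  have h₂₂ := hblock 2 1
  simp only [Fin.castSucc_zero, Fin.castSucc_one, Fin.succ_zero_eq_one, Fin.succ_one_eq_two,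
    block_add, block_mul, block_eq_zero_of_mem_LieP hp, block_eq_zero_of_mem_LiePtau hq,
    zero_lt_one, Fin.reduceLT, zero_mul, mul_zero, zero_add, add_zero] at h₁₁ h₁₂ h₂₁ h₂₂
  have hX₁₀ : block 1 0 x = M * block 2 0 x :=
    eq_mul_of_block_equations (isUnit_det_of_rank_eq_card h22) (hM 0) (hM 1) h₁₁ h₁₂ h₂₁ h₂₂
  refine not_isUnit_det_of_block_row_eq_mul x M (fun j => ?_) hx
  fin_cases j
  exacts [hX₁₀, hM 0, hM 1]
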